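/- Let S be a numerical semigroup with multiplicity m, minimally generated by g_1 < ... < g_ν, and let α_i = max{h | h·g_i ∈ Ap(S,m)} for i ≥ 2. Then Ap(S,m) = {Σ_{i=2}^{ν} λ_i g_i | 0 ≤ λ_i ≤ α_i} if and only if m = Π_{i=2}^{ν}(α_i + 1). -/

import Mathlib

/-!
Reducing modulo `m` is a bijection from `Ap(S, m)` onto the residues `0, …, m - 1`, so
`Ap(S, m)` has exactly `m` elements. Every element of `Ap(S, m)` is a combination of
`g_2, …, g_ν` with `λ_i g_i ∈ Ap(S, m)`, hence `λ_i ≤ α_i`: the Apéry set lies in the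
rectangle, which is the image of a box of `Π (α_i + 1)` coefficient vectors. If the product
is `m`, the inclusion of a set of size `m` into a set of size at most `m` is an equality.
Conversely, if the rectangle is the Apéry set, two coefficient vectors `λ ≠ μ` of the box
with the same value would give a second representation `α - λ + μ` of `Σ α_i g_i` with
coefficient larger than `α_j` at some `j`, putting `(α_j + 1) g_j` into `Ap(S, m)`; so the
box maps injectively and the rectangle has exactly `Π (α_i + 1)` elements.
-/

/-- A numerical semigroup: a subset of ℕ containing 0, closed under addition,
with finite complement. -/
structure NumSgp where
  carrier : Set ℕ
  zero_mem : 0 ∈ carrier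
  add_mem : ∀ a ∈ carrier, ∀ b ∈ carrier, a + b ∈ carrier
  cofinite : Set.Finite carrierᶜ

namespace NumSgp

/-- The multiplicity: the smallest positive element. -/
noncomputable def mult (S : NumSgp) : ℕ := sInf {s | s ∈ S.carrier ∧ s ≠ 0}

/-- The Apéry set of `S` with respect to `n`: elements `s ∈ S` with `s - n ∉ S`. -/
def Apery (S : NumSgp) (n : ℕ) : Set ℕ :=
  {s | s ∈ S.carrier ∧ ¬ ∃ t ∈ S.carrier, s = t + n}

/-- `s ⪯ t` : there is `u ∈ S` with `t = s + u`. -/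
def sle (S : NumSgp) (s t : ℕ) : Prop := ∃ u ∈ S.carrier, t = s + u

/-- Membership for integers. -/
def memZ (S : NumSgp) (x : ℤ) : Prop := ∃ n ∈ S.carrier, (n : ℤ) = x

/-- `f` is the Frobenius number of `S`: the largest integer not in `S`. -/
def IsFrob (S : NumSgp) (f : ℤ) : Prop := ¬ S.memZ f ∧ ∀ x : ℤ, f < x → S.memZ x

/-- `S` is symmetric: `x ∈ S ↔ f - x ∉ S` for all integers `x`. -/
def Symm (S : NumSgp) : Prop :=
  ∃ f : ℤ, S.IsFrob f ∧ ∀ x : ℤ, S.memZ x ↔ ¬ S.memZ (f - x)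

/-- `s` is a minimal generator (irreducible element) of `S`. -/
def IsMinGen (S : NumSgp) (s : ℕ) : Prop :=
  s ∈ S.carrier ∧ s ≠ 0 ∧
    ¬ ∃ a ∈ S.carrier, ∃ b ∈ S.carrier, a ≠ 0 ∧ b ≠ 0 ∧ s = a + b

/-- `g : Fin ν → ℕ` enumerates the minimal generators in increasing order. -/
def MinGens (S : NumSgp) {ν : ℕ} (g : Fin ν → ℕ) : Prop :=
  StrictMono g ∧ Set.range g = {s | S.IsMinGen s}

/-- The order of `s`: the maximal total coefficient sum over representations of `s`
in terms of the generators `g`. -/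
noncomputable def ord {ν : ℕ} (g : Fin ν → ℕ) (s : ℕ) : ℕ :=
  sSup {k | ∃ lam : Fin ν → ℕ, s = ∑ i, lam i * g i ∧ k = ∑ i, lam i}

/-- `s` has a unique representation in terms of the generators `g`. -/
def UniqueRep {ν : ℕ} (g : Fin ν → ℕ) (s : ℕ) : Prop :=
  ∃! lam : Fin ν → ℕ, s = ∑ i, lam i * g i

/-- `s` has a unique maximal representation in terms of the generators `g`. -/
def UniqueMaxRep {ν : ℕ} (g : Fin ν → ℕ) (s : ℕ) : Prop :=
  ∃! lam : Fin ν → ℕ, s = ∑ i, lam i * g i ∧ ∑ i, lam i = ord g s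

/-- The submonoid of ℕ generated by the generators `g j` with `j < i`. -/
def genBy {ν : ℕ} (g : Fin ν → ℕ) (i : Fin ν) : Set ℕ :=
  {s | ∃ lam : Fin ν → ℕ, (∀ j, ¬ j < i → lam j = 0) ∧ s = ∑ j, lam j * g j}

/-- `τ_i = min {h | h·g_i ∈ ⟨g_1, …, g_{i-1}⟩} - 1`. -/
noncomputable def tau {ν : ℕ} (g : Fin ν → ℕ) (i : Fin ν) : ℕ :=
  sInf {h | h * g i ∈ genBy g i} - 1

/-- `α_i = max {h | h·g_i ∈ Ap(S, m)}`. -/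
noncomputable def alpha (S : NumSgp) {ν : ℕ} (g : Fin ν → ℕ) (i : Fin ν) : ℕ :=
  sSup {h | h * g i ∈ S.Apery S.mult}

/-- `β_i = max {h | h·g_i ∈ Ap(S, m) and ord(h·g_i) = h}`. -/
noncomputable def beta (S : NumSgp) {ν : ℕ} (g : Fin ν → ℕ) (i : Fin ν) : ℕ :=
  sSup {h | h * g i ∈ S.Apery S.mult ∧ ord g (h * g i) = h}

/-- `γ_i`. -/
noncomputable def gamma (S : NumSgp) {ν : ℕ} (g : Fin ν → ℕ) (i : Fin ν) : ℕ :=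
  sSup {h | h * g i ∈ S.Apery S.mult ∧ ord g (h * g i) = h ∧ UniqueMaxRep g (h * g i)}

/-- The "rectangle" `{Σ_{i ≥ 2} λ_i g_i | 0 ≤ λ_i ≤ c_i}` (indices here start at 0,
the first generator does not appear). -/
def rect {ν : ℕ} (g c : Fin ν → ℕ) : Set ℕ :=
  {s | ∃ lam : Fin ν → ℕ, (∀ i, i.val = 0 → lam i = 0) ∧ (∀ i, lam i ≤ c i) ∧
    s = ∑ i, lam i * g i}

/-- `Π_{i ≥ 2} (c_i + 1)` (the first index excluded). -/
def piProd {ν : ℕ} (c : Fin ν → ℕ) : ℕ :=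
  ∏ i ∈ Finset.univ.filter (fun i : Fin ν => i.val ≠ 0), (c i + 1)

/-- `S` is telescopic. -/
def Telescopic (S : NumSgp) : Prop :=
  ∃ (ν : ℕ) (g : Fin ν → ℕ), S.MinGens g ∧ S.Apery S.mult = rect g (tau g)

/-- `S` has α-rectangular Apéry set. -/
def AlphaRect (S : NumSgp) : Prop :=
  ∃ (ν : ℕ) (g : Fin ν → ℕ), S.MinGens g ∧ S.Apery S.mult = rect g (S.alpha g)

/-- `S` has γ-rectangular Apéry set. -/
def GammaRect (S : NumSgp) : Prop :=
  ∃ (ν : ℕ) (g : Fin ν → ℕ), S.MinGens g ∧ S.Apery S.mult = rect g (S.gamma g)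

/-- `S` is associated to a plane branch: telescopic and `(τ_i+1) g_i < g_{i+1}`. -/
def PlaneBranch (S : NumSgp) : Prop :=
  ∃ (ν : ℕ) (g : Fin ν → ℕ), S.MinGens g ∧ S.Apery S.mult = rect g (tau g) ∧
    ∀ i : Fin ν, 1 ≤ i.val → ∀ h : i.val + 1 < ν, (tau g i + 1) * g i < g ⟨i.val + 1, h⟩

/-- `S` is free: for some rearrangement `n` of the minimal generators,
`Ap(S, n_1) = {Σ_{i ≥ 2} λ_i n_i | 0 ≤ λ_i ≤ φ_i}`. -/
def Free (S : NumSgp) : Prop :=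
  ∃ (ν : ℕ) (hν : 0 < ν) (n : Fin ν → ℕ), Function.Injective n ∧
    Set.range n = {s | S.IsMinGen s} ∧ S.Apery (n ⟨0, hν⟩) = rect n (tau n)

/-- The kernel congruence of the factorization map `λ ↦ Σ λ_i g_i`. -/
def kerCon {ν : ℕ} (g : Fin ν → ℕ) : AddCon (Fin ν → ℕ) where
  r a b := ∑ i, a i * g i = ∑ i, b i * g i
  iseqv := ⟨fun _ => rfl, Eq.symm, Eq.trans⟩
  add' := by
    intro a b c d h1 h2
    simp only [Pi.add_apply, add_mul, Finset.sum_add_distrib]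
    exact congrArg₂ (· + ·) h1 h2

/-- `S` is a complete intersection: it admits a presentation of cardinality `ν - 1`
(the cardinality of any minimal presentation equals `ν - 1`). -/
def CompleteIntersection (S : NumSgp) : Prop :=
  ∃ (ν : ℕ) (g : Fin ν → ℕ), S.MinGens g ∧
    ∃ ρ : Finset ((Fin ν → ℕ) × (Fin ν → ℕ)), ρ.card = ν - 1 ∧
      addConGen (fun a b => (a, b) ∈ ρ) = kerCon g

end NumSgp

open NumSgp

namespace NumSgp

variable (S : NumSgp)

def toAddSubmonoid : AddSubmonoid ℕ where
  carrier := S.carrier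
  add_mem' ha hb := S.add_mem _ ha _ hb
  zero_mem' := S.zero_mem

lemma mul_mem {s : ℕ} (hs : s ∈ S.carrier) (k : ℕ) : k * s ∈ S.carrier :=
  S.toAddSubmonoid.nsmul_mem hs k

lemma sum_mul_mem {ι : Type*} {g : ι → ℕ} (hg : ∀ i, g i ∈ S.carrier) (s : Finset ι)
    (lam : ι → ℕ) : ∑ i ∈ s, lam i * g i ∈ S.carrier :=
  S.toAddSubmonoid.sum_mem fun i _ => S.mul_mem (hg i) (lam i)

lemma exists_forall_ge_mem : ∃ N, ∀ n, N ≤ n → n ∈ S.carrier := by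
  obtain ⟨N, hN⟩ := S.cofinite.bddAbove
  refine ⟨N + 1, fun n hn => ?_⟩
  by_contra h
  have := hN h
  omega

lemma mult_mem_and_ne_zero : S.mult ∈ S.carrier ∧ S.mult ≠ 0 := by
  obtain ⟨N, hN⟩ := S.exists_forall_ge_mem
  exact Nat.sInf_mem (s := {s | s ∈ S.carrier ∧ s ≠ 0}) ⟨N + 1, hN _ (by omega), by omega⟩

lemma mult_le {s : ℕ} (hs : s ∈ S.carrier) (h0 : s ≠ 0) : S.mult ≤ s :=
  Nat.sInf_le ⟨hs, h0⟩

lemma isMinGen_mult : S.IsMinGen S.mult := by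
  obtain ⟨hm, hm0⟩ := S.mult_mem_and_ne_zero
  refine ⟨hm, hm0, ?_⟩
  rintro ⟨a, ha, b, hb, ha0, hb0, hab⟩
  have := S.mult_le ha ha0
  have := S.mult_le hb hb0
  omega

variable {S}

lemma mem_apery_of_eq_add {n w v u : ℕ} (hw : w ∈ S.Apery n) (hv : v ∈ S.carrier)
    (hu : u ∈ S.carrier) (h : w = v + u) : v ∈ S.Apery n := by
  refine ⟨hv, ?_⟩
  rintro ⟨t, ht, rfl⟩
  exact hw.2 ⟨t + u, S.add_mem _ ht _ hu, by omega⟩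

lemma injOn_mod_apery {n : ℕ} (hn : n ∈ S.carrier) : Set.InjOn (· % n) (S.Apery n) := by
  intro a ha b hb hab
  wlog hle : a ≤ b generalizing a b
  · exact (this hb ha hab.symm (by omega)).symm
  obtain ⟨k, hk⟩ := (Nat.modEq_iff_dvd' hle).mp hab
  rcases k with _ | k
  · omega
  · refine absurd ⟨a + k * n, S.add_mem _ ha.1 _ (S.mul_mem hn k), ?_⟩ hb.2
    rw [Nat.mul_succ] at hk
    lia

/-- The least element of `S` in a residue class modulo `n` lies in `Ap(S, n)`. -/
lemma image_mod_apery {n : ℕ} (hn0 : n ≠ 0) : (· % n) '' S.Apery n = Set.Iio n := by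
  refine Set.Subset.antisymm ?_ fun r (hr : r < n) => ?_
  · rintro _ ⟨a, -, rfl⟩
    exact Nat.mod_lt a (Nat.pos_of_ne_zero hn0)
  obtain ⟨N, hN⟩ := S.exists_forall_ge_mem
  have hne : {s | s ∈ S.carrier ∧ s % n = r}.Nonempty := by
    refine ⟨r + n * N, hN _ (le_add_left (Nat.le_mul_of_pos_left N (by omega))), ?_⟩
    rw [Nat.add_mul_mod_self_left, Nat.mod_eq_of_lt hr]
  obtain ⟨hs, hsr⟩ := Nat.sInf_mem hne
  refine ⟨_, ⟨hs, ?_⟩, hsr⟩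
  rintro ⟨t, ht, hts⟩
  have : sInf {s | s ∈ S.carrier ∧ s % n = r} ≤ t :=
    Nat.sInf_le ⟨ht, by rw [← hsr, hts, Nat.add_mod_right]⟩
  omega

theorem ncard_apery {n : ℕ} (hn : n ∈ S.carrier) (hn0 : n ≠ 0) : (S.Apery n).ncard = n := by
  rw [← (injOn_mod_apery hn).ncard_image, image_mod_apery hn0,
    ← Finset.coe_range, Set.ncard_coe_finset, Finset.card_range]

lemma apery_mult_finite : (S.Apery S.mult).Finite := by
  obtain ⟨hm, hm0⟩ := S.mult_mem_and_ne_zero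
  exact Set.finite_of_ncard_ne_zero (by rwa [ncard_apery hm hm0])

variable {ν : ℕ} {g : Fin ν → ℕ}

lemma MinGens.mem (hg : S.MinGens g) (i : Fin ν) : g i ∈ S.carrier :=
  (hg.2.subset (Set.mem_range_self i)).1

lemma MinGens.ne_zero (hg : S.MinGens g) (i : Fin ν) : g i ≠ 0 :=
  (hg.2.subset (Set.mem_range_self i)).2.1

lemma MinGens.exists_repr (hg : S.MinGens g) {s : ℕ} (hs : s ∈ S.carrier) :
    ∃ lam : Fin ν → ℕ, s = ∑ i, lam i * g i := by
  induction s using Nat.strong_induction_on with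
  | _ s ih =>
    by_cases h0 : s = 0
    · exact ⟨0, by simp [h0]⟩
    by_cases hmg : S.IsMinGen s
    · obtain ⟨i, rfl⟩ : s ∈ Set.range g := hg.2.symm.subset hmg
      exact ⟨Pi.single i 1, by simp [Pi.single_apply]⟩
    · obtain ⟨a, ha, b, hb, ha0, hb0, rfl⟩ :
          ∃ a ∈ S.carrier, ∃ b ∈ S.carrier, a ≠ 0 ∧ b ≠ 0 ∧ s = a + b := by
        by_contra hc
        exact hmg ⟨hs, h0, hc⟩
      obtain ⟨la, rfl⟩ := ih a (by omega) ha
      obtain ⟨lb, hlb⟩ := ih b (by omega) hb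
      exact ⟨la + lb, by simp only [Pi.add_apply, add_mul, Finset.sum_add_distrib, hlb]⟩

lemma MinGens.apply_eq_mult (hg : S.MinGens g) {i : Fin ν} (hi : i.val = 0) :
    g i = S.mult := by
  obtain ⟨j, hj⟩ : S.mult ∈ Set.range g := hg.2.symm.subset S.isMinGen_mult
  have := hg.1.monotone (show i ≤ j by rw [Fin.le_def]; omega)
  have := S.mult_le (hg.mem i) (hg.ne_zero i)
  omega

lemma MinGens.le_alpha (hg : S.MinGens g) {i : Fin ν} {h : ℕ}
    (hh : h * g i ∈ S.Apery S.mult) : h ≤ S.alpha g i := by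
  obtain ⟨N, hN⟩ := apery_mult_finite.bddAbove
  refine le_csSup ⟨N, fun k hk => ?_⟩ hh
  exact (Nat.le_mul_of_pos_right k (Nat.pos_of_ne_zero (hg.ne_zero i))).trans (hN hk)

lemma MinGens.apery_subset_rect (hg : S.MinGens g) :
    S.Apery S.mult ⊆ rect g (S.alpha g) := by
  intro w hw
  obtain ⟨lam, hlam⟩ := hg.exists_repr hw.1
  have hsplit (i : Fin ν) : w = lam i * g i + ∑ j ∈ Finset.univ.erase i, lam j * g j := by
    rw [hlam, Finset.add_sum_erase _ (fun j => lam j * g j) (Finset.mem_univ i)]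
  have hrest (i : Fin ν) := S.sum_mul_mem hg.mem (Finset.univ.erase i) lam
  refine ⟨lam, fun i hi => ?_, fun i => ?_, hlam⟩
  · by_contra h0
    obtain ⟨k, hk⟩ := Nat.exists_eq_succ_of_ne_zero h0
    refine hw.2 ⟨k * g i + ∑ j ∈ Finset.univ.erase i, lam j * g j,
      S.add_mem _ (S.mul_mem (hg.mem i) k) _ (hrest i), ?_⟩
    rw [hsplit i, hk, Nat.succ_mul, hg.apply_eq_mult hi]
    ring
  · exact hg.le_alpha (mem_apery_of_eq_add hw (S.mul_mem (hg.mem i) _) (hrest i) (hsplit i))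

def box (c : Fin ν → ℕ) : Finset (Fin ν → ℕ) :=
  Fintype.piFinset fun i => if i.val = 0 then {0} else Finset.range (c i + 1)

lemma mem_box {c lam : Fin ν → ℕ} :
    lam ∈ box c ↔ (∀ i, i.val = 0 → lam i = 0) ∧ (∀ i, lam i ≤ c i) := by
  simp only [box, Fintype.mem_piFinset]
  refine ⟨fun h => ⟨fun i hi => by simpa [hi] using h i, fun i => ?_⟩,
    fun ⟨h0, hc⟩ i => ?_⟩
  · have := h i
    by_cases hi : i.val = 0 <;> simp [hi] at this <;> omega
  · by_cases hi : i.val = 0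
    · simp [hi, h0 i hi]
    · simpa [hi, Nat.lt_succ_iff] using hc i

lemma card_box (c : Fin ν → ℕ) : (box c).card = piProd c := by
  rw [box, Fintype.card_piFinset, piProd, Finset.prod_filter]
  refine Finset.prod_congr rfl fun i _ => ?_
  by_cases hi : i.val = 0 <;> simp [hi]

lemma rect_eq_image_box (g c : Fin ν → ℕ) :
    rect g c = (box c).image fun lam => ∑ i, lam i * g i := by
  ext s
  simp only [rect, Finset.coe_image, Set.mem_image, Finset.mem_coe, mem_box]
  exact ⟨fun ⟨lam, h0, hc, hs⟩ => ⟨lam, ⟨h0, hc⟩, hs.symm⟩,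
    fun ⟨lam, ⟨h0, hc⟩, hs⟩ => ⟨lam, h0, hc, hs.symm⟩⟩

lemma ncard_rect_le (g c : Fin ν → ℕ) : (rect g c).ncard ≤ piProd c := by
  rw [rect_eq_image_box, Set.ncard_coe_finset, ← card_box]
  exact Finset.card_image_le

lemma rect_finite (g c : Fin ν → ℕ) : (rect g c).Finite := by
  rw [rect_eq_image_box]
  exact Finset.finite_toSet _

lemma injOn_box_of_rect_subset_apery {n : ℕ} {c : Fin ν → ℕ} (hg : ∀ i, g i ∈ S.carrier)
    (hsub : rect g c ⊆ S.Apery n) (hmax : ∀ i, (c i + 1) * g i ∉ S.Apery n) :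
    Set.InjOn (fun lam : Fin ν → ℕ => ∑ i, lam i * g i) (box c) := by
  have key : ∀ lam ∈ box c, ∀ mu ∈ box c,
      ∑ i, lam i * g i = ∑ i, mu i * g i → ∀ j, ¬ lam j < mu j := by
    intro lam hlam mu hmu heq j hj
    obtain ⟨hlam0, hlamc⟩ := mem_box.1 hlam
    set top : Fin ν → ℕ := fun i => if i.val = 0 then 0 else c i
    have hlam_top (i : Fin ν) : lam i ≤ top i := by
      by_cases hi : i.val = 0 <;> simp [top, hi, hlam0, hlamc]
    have htop : ∑ i, top i * g i ∈ S.Apery n :=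
      hsub ⟨top, fun i hi => by simp [top, hi],
        fun i => by by_cases hi : i.val = 0 <;> simp [top, hi], rfl⟩
    set B : Fin ν → ℕ := fun i => top i - lam i + mu i
    have hB : ∑ i, top i * g i = ∑ i, B i * g i := calc
      ∑ i, top i * g i = ∑ i, (top i - lam i) * g i + ∑ i, lam i * g i := by
        simp only [← Finset.sum_add_distrib, ← add_mul, Nat.sub_add_cancel (hlam_top _)]
      _ = ∑ i, B i * g i := by simp only [heq, B, add_mul, Finset.sum_add_distrib]
    have hj0 : j.val ≠ 0 := fun h0 => by
      have := (mem_box.1 hmu).1 j h0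
      rw [hlam0 j h0] at hj
      omega
    obtain ⟨d, hd⟩ : ∃ d, B j = c j + 1 + d := ⟨B j - (c j + 1), by simp [B, top, hj0]; omega⟩
    refine hmax j (mem_apery_of_eq_add htop (S.mul_mem (hg j) _)
      (S.add_mem _ (S.mul_mem (hg j) d) _ (S.sum_mul_mem hg (Finset.univ.erase j) B)) ?_)
    rw [hB, ← Finset.add_sum_erase _ _ (Finset.mem_univ j), hd]
    ring
  intro lam hlam mu hmu h
  funext j
  exact le_antisymm (not_lt.1 (key mu hmu lam hlam h.symm j))
    (not_lt.1 (key lam hlam mu hmu h j))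

end NumSgp

/-- `Ap(S, m)` is α-rectangular iff `m = Π_{i≥2}(α_i + 1)`. -/
theorem stmt_4 (S : NumSgp) (ν : ℕ) (g : Fin ν → ℕ) (hg : S.MinGens g) :
    S.Apery S.mult = rect g (S.alpha g) ↔ S.mult = piProd (S.alpha g) := by
  obtain ⟨hm, hm0⟩ := S.mult_mem_and_ne_zero
  constructor
  · intro hrect
    have hmax (i : Fin ν) : (S.alpha g i + 1) * g i ∉ S.Apery S.mult := fun h => by
      have := hg.le_alpha h
      omega
    have hinj := injOn_box_of_rect_subset_apery hg.mem hrect.ge hmax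
    rw [← ncard_apery hm hm0, hrect, rect_eq_image_box, Set.ncard_coe_finset,
      Finset.card_image_of_injOn hinj, card_box]
  · intro hprod
    refine Set.eq_of_subset_of_ncard_le hg.apery_subset_rect ?_ (rect_finite _ _)
    rw [ncard_apery hm hm0, hprod]
    exact ncard_rect_le _ _
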